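/- arXiv:1107.1480 — 2 statements merged into one kernel-verified Lean document; each statement's English description precedes it below -/
import Mathlib

section
/- The inverse limit G = lim←(Ω'_n, φ'_n) is a group under the componentwise operation (g_n)_n · (h_n)_n = ((g_n h_n)')_n, and the set 𝒢 of locally eventually constant sequences is a subgroup of G. -/
open Classical
noncomputable section

namespace GCG

/-- One-step backtrack reduction of a word: replace some substring `u v u` by `u`. -/
def ReduceStep {V : Type*} (l r : List V) : Prop :=
  ∃ (p s : List V) (u v : V), l = p ++ [u, v, u] ++ s ∧ r = p ++ [u] ++ s

/-- A word is reduced if it admits no one-step reduction. -/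
def IsReduced {V : Type*} (l : List V) : Prop := ∀ r, ¬ ReduceStep l r

/-- The reduction `ω'` of a word: the (for words in a simple graph, unique) reduced
word obtained from it by repeatedly replacing substrings `u v u` by `u`. -/
def reduce {V : Type*} (l : List V) : List V :=
  if h : ∃ r, Relation.ReflTransGen ReduceStep l r ∧ IsReduced r then h.choose else l

/-- Compress every maximal constant substring `u u ⋯ u` to the single letter `u`. -/
def compress {V : Type*} : List V → List V
  | [] => []
  | [a] => [a]
  | a :: b :: t => if a = b then compress (b :: t) else a :: compress (b :: t)

/-- Delete–Replace–Compress along `f`: delete the letters sent into `S`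
(the subdivision points), replace the remaining letters by their images,
and compress maximal constant substrings. -/
def DRC {V' V S : Type*} (f : V' → V ⊕ S) (w : List V') : List V :=
  compress (w.filterMap fun v => (f v).getLeft?)

/-- A word in a simple graph: a finite list of vertices in which consecutive
letters are distinct and joined by an edge. -/
def IsWord {V : Type*} (G : SimpleGraph V) (l : List V) : Prop := l.Chain' G.Adj

/-- A loop word at `x`: a word that starts and ends with `x`. -/
def IsLoopWord {V : Type*} (G : SimpleGraph V) (x : V) (l : List V) : Prop :=
  l.Chain' G.Adj ∧ l.head? = some x ∧ l.getLast? = some x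

/-- Concatenation of loop words: the duplicated base letter is dropped. -/
def lconcat {V : Type*} (ω ξ : List V) : List V := ω.dropLast ++ ξ

/-- `Gs` (on vertex set `V ⊕ S`) is the subdivision of `G` in which every edge is
evenly subdivided into `d` edges: every edge of `G` is replaced by a path of
length `d` through fresh interior vertices from `S`, these paths are compatible
with edge reversal, their interiors are pairwise disjoint, they exhaust `S`, and
their steps are exactly the edges of `Gs`. -/
def IsEvenSubdivision {V S : Type*} (G : SimpleGraph V) (d : ℕ)
    (Gs : SimpleGraph (V ⊕ S)) : Prop :=
  ∃ P : G.Dart → Fin (d + 1) → V ⊕ S,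
    (∀ e, P e 0 = Sum.inl e.toProd.1) ∧
    (∀ e, P e (Fin.last d) = Sum.inl e.toProd.2) ∧
    (∀ e (i : Fin (d + 1)), 0 < i.val → i.val < d → ∃ s : S, P e i = Sum.inr s) ∧
    (∀ e, Function.Injective (P e)) ∧
    (∀ e (i : Fin (d + 1)), P e.symm i = P e i.rev) ∧
    (∀ s : S, ∃ e i, P e i = Sum.inr s) ∧
    (∀ e e' (i i' : Fin (d + 1)), 0 < i.val → i.val < d → P e i = P e' i' →
      (e' = e ∧ i' = i) ∨ (e' = e.symm ∧ i' = i.rev)) ∧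
    (∀ a b, Gs.Adj a b ↔ ∃ e, ∃ i : Fin d, P e i.castSucc = a ∧ P e i.succ = b)

/-- The inverse sequence of finite connected simple graphs `X_n` with even
subdivisions `X*_n` and simplicial bonding surjections `f_n : X_{n+1} → X*_n`
mapping every edge onto an edge, together with coherent base vertices `x_n`. -/
structure GraphTower where
  V : ℕ → Type
  S : ℕ → Type
  finV : ∀ n, Finite (V n)
  G : ∀ n, SimpleGraph (V n)
  conn : ∀ n, (G n).Connected
  d : ℕ → ℕ
  two_le_d : ∀ n, 2 ≤ d n
  Gs : ∀ n, SimpleGraph (V n ⊕ S n)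
  subdiv : ∀ n, IsEvenSubdivision (G n) (d n) (Gs n)
  f : ∀ n, V (n + 1) → V n ⊕ S n
  f_surj : ∀ n, Function.Surjective (f n)
  f_simplicial : ∀ n ⦃u v⦄, (G (n + 1)).Adj u v → (Gs n).Adj (f n u) (f n v)
  f_edge_surj : ∀ n ⦃a b⦄, (Gs n).Adj a b →
    ∃ u v, (G (n + 1)).Adj u v ∧ f n u = a ∧ f n v = b
  x : ∀ n, V n
  f_base : ∀ n, f n (x (n + 1)) = Sum.inl (x n)

namespace GraphTower

/-- The projection `φ_n = DRC_n`. -/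
def phi (T : GraphTower) (n : ℕ) : List (T.V (n + 1)) → List (T.V n) := DRC (T.f n)

/-- The composite projection `φ_n ∘ φ_{n+1} ∘ ⋯ ∘ φ_{n+m-1}` (the identity for `m = 0`). -/
def proj (T : GraphTower) (n : ℕ) : (m : ℕ) → List (T.V (n + m)) → List (T.V n)
  | 0, w => w
  | m + 1, w => T.proj n m (T.phi (n + m) w)

/-- Membership in `Ω = lim←(Ω_n, φ_n)`: a coherent sequence of loop words. -/
def MemOmega (T : GraphTower) (ω : ∀ n, List (T.V n)) : Prop :=
  (∀ n, IsLoopWord (T.G n) (T.x n) (ω n)) ∧ ∀ n, T.phi n (ω (n + 1)) = ω n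

/-- Membership in `G = lim←(Ω'_n, φ'_n)`: a `φ'`-coherent sequence of reduced loop words. -/
def MemG (T : GraphTower) (g : ∀ n, List (T.V n)) : Prop :=
  (∀ n, IsLoopWord (T.G n) (T.x n) (g n) ∧ IsReduced (g n)) ∧
    ∀ n, reduce (T.phi n (g (n + 1))) = g n

/-- A sequence is locally eventually constant if for every fixed level `n` the
unreduced projections of its later terms to level `n` are eventually constant. -/
def LEC (T : GraphTower) (g : ∀ n, List (T.V n)) : Prop :=
  ∀ n, ∃ M, ∀ m, M ≤ m → T.proj n m (g (n + m)) = T.proj n M (g (n + M))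

/-- `ω` is the stabilization `←g` of `g`: for every level `n`, the projections of
the later terms of `g` to level `n` eventually equal `ω n`. -/
def IsStabilization (T : GraphTower) (g ω : ∀ n, List (T.V n)) : Prop :=
  ∀ n, ∃ M, ∀ m, M ≤ m → T.proj n m (g (n + m)) = ω n

/-- The identity word sequence `(x_n)_n`. -/
def seqOne (T : GraphTower) : ∀ n, List (T.V n) := fun n => [T.x n]

/-- Termwise concatenation followed by termwise reduction. -/
def seqMul (T : GraphTower) (g h : ∀ n, List (T.V n)) : ∀ n, List (T.V n) :=
  fun n => reduce (lconcat (g n) (h n))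

/-- Termwise reversal. -/
def seqInv (T : GraphTower) (g : ∀ n, List (T.V n)) : ∀ n, List (T.V n) :=
  fun n => (g n).reverse

/-- Membership in `←𝒢`: the stabilization of some locally eventually constant
element of `G`. -/
def MemSG (T : GraphTower) (ω : ∀ n, List (T.V n)) : Prop :=
  ∃ g, T.MemG g ∧ T.LEC g ∧ T.IsStabilization g ω

/-- `τ = ω ∗ ξ`: termwise concatenation, followed by termwise reduction,
followed by stabilization. -/
def star (T : GraphTower) (ω ξ τ : ∀ n, List (T.V n)) : Prop :=
  T.IsStabilization (fun n => reduce (lconcat (ω n) (ξ n))) τ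

end GraphTower

end GCG

/-!
Deleting backtracks `u v u ↦ u` is locally confluent, so every word has a unique reduced form
`ω'`; the group laws for reduced loop words then follow from `(ω ξ)' = (ω' ξ')'`, associativity
of concatenation and the collapse of `ω ω⁻¹` (a palindrome) to `x_n`. They pass to `G` termwise
because `φ_n` commutes with concatenation and reversal and maps reductions to reductions: after
DRC a backtrack `u v u` either disappears or becomes a single backtrack, since the vertices of
`X*_n` that a path meets between two consecutive original vertices all lie on one subdivided edge.
For `𝒢`, inverses are immediate since projections commute with reversal, and products are handled
by a length argument.
-/

namespace GCG

open Relation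

section Reduction

variable {V : Type*} {l r : List V}

abbrev Reduces (l r : List V) : Prop := ReflTransGen ReduceStep l r

theorem ReduceStep.length_eq (h : ReduceStep l r) : l.length = r.length + 2 := by
  obtain ⟨p, s, u, v, rfl, rfl⟩ := h
  simp only [List.length_append, List.length_cons, List.length_nil]
  omega

theorem Reduces.length_le (h : Reduces l r) : r.length ≤ l.length := by
  induction h with
  | refl => exact le_rfl
  | tail _ hstep ih => have := hstep.length_eq; omega

theorem Reduces.eq_of_length_le (h : Reduces l r) (hlen : l.length ≤ r.length) : l = r := by
  rcases h.cases_head with rfl | ⟨m, hm, hmr⟩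
  · rfl
  · have := hm.length_eq; have := Reduces.length_le hmr; omega

theorem IsReduced.eq_of_reduces (hl : IsReduced l) (h : Reduces l r) : l = r := by
  rcases h.cases_head with rfl | ⟨m, hm, -⟩
  · rfl
  · exact absurd hm (hl m)

theorem exists_reduces_isReduced (l : List V) : ∃ r, Reduces l r ∧ IsReduced r := by
  induction hn : l.length using Nat.strong_induction_on generalizing l with
  | _ n ih =>
    by_cases hl : IsReduced l
    · exact ⟨l, .refl, hl⟩
    · obtain ⟨m, hm⟩ := _root_.not_forall_not.1 hl
      obtain ⟨r, hmr, hr⟩ := ih m.length (by have := hm.length_eq; omega) m rfl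
      exact ⟨r, .head hm hmr, hr⟩

theorem isReduced_singleton (a : V) : IsReduced [a] :=
  fun _ h => by simpa using h.length_eq

theorem ReduceStep.append_left (p : List V) (h : ReduceStep l r) :
    ReduceStep (p ++ l) (p ++ r) := by
  obtain ⟨q, s, u, v, rfl, rfl⟩ := h
  exact ⟨p ++ q, s, u, v, by simp, by simp⟩

theorem ReduceStep.append_right (s : List V) (h : ReduceStep l r) :
    ReduceStep (l ++ s) (r ++ s) := by
  obtain ⟨p, q, u, v, rfl, rfl⟩ := h
  exact ⟨p, q ++ s, u, v, by simp, by simp⟩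

theorem Reduces.append_left (p : List V) (h : Reduces l r) : Reduces (p ++ l) (p ++ r) :=
  ReflTransGen.lift (p ++ ·) (fun _ _ => ReduceStep.append_left p) _ _ h

theorem Reduces.append_right (s : List V) (h : Reduces l r) : Reduces (l ++ s) (r ++ s) :=
  ReflTransGen.lift (· ++ s) (fun _ _ => ReduceStep.append_right s) _ _ h

theorem ReduceStep.reverse (h : ReduceStep l r) : ReduceStep l.reverse r.reverse := by
  obtain ⟨p, s, u, v, rfl, rfl⟩ := h
  exact ⟨s.reverse, p.reverse, u, v, by simp, by simp⟩

theorem Reduces.reverse (h : Reduces l r) : Reduces l.reverse r.reverse :=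
  ReflTransGen.lift List.reverse (fun _ _ => ReduceStep.reverse) _ _ h

theorem IsReduced.reverse (hl : IsReduced l) : IsReduced l.reverse :=
  fun r h => hl r.reverse (by simpa using h.reverse)

/-- Two backtracks in one word either coincide, overlap in `u v u v` (same result), overlap in
`u v u w u` (both results reduce to `u`), or are disjoint (they commute). -/
theorem ReduceStep.join_of_length_le {p₁ p₂ s₁ s₂ : List V} {u₁ v₁ u₂ v₂ : V}
    (hlen : p₁.length ≤ p₂.length)
    (heq : p₁ ++ [u₁, v₁, u₁] ++ s₁ = p₂ ++ [u₂, v₂, u₂] ++ s₂) :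
    p₁ ++ [u₁] ++ s₁ = p₂ ++ [u₂] ++ s₂ ∨
      ∃ m, ReduceStep (p₁ ++ [u₁] ++ s₁) m ∧ ReduceStep (p₂ ++ [u₂] ++ s₂) m := by
  induction p₁ generalizing p₂ with
  | nil =>
    match p₂, heq with
    | [], heq =>
      simp only [List.nil_append, List.cons_append, List.cons.injEq] at heq
      obtain ⟨rfl, -, -, rfl⟩ := heq
      exact .inl rfl
    | [_], heq =>
      simp only [List.nil_append, List.cons_append, List.cons.injEq] at heq
      obtain ⟨rfl, rfl, rfl, rfl⟩ := heq
      exact .inl rfl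
    | [_, _], heq =>
      simp only [List.nil_append, List.cons_append, List.cons.injEq] at heq
      obtain ⟨rfl, rfl, rfl, rfl⟩ := heq
      exact .inr ⟨u₁ :: s₂, ⟨[], s₂, u₁, v₂, rfl, rfl⟩,
        ⟨[], s₂, u₁, v₁, rfl, rfl⟩⟩
    | _ :: _ :: _ :: q, heq =>
      simp only [List.nil_append, List.cons_append, List.cons.injEq] at heq
      obtain ⟨rfl, rfl, rfl, rfl⟩ := heq
      exact .inr ⟨u₁ :: q ++ [u₂] ++ s₂,
        ⟨u₁ :: q, s₂, u₂, v₂, by simp, by simp⟩,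
        ⟨[], q ++ [u₂] ++ s₂, u₁, v₁, by simp, by simp⟩⟩
  | cons a p₁ ih =>
    obtain _ | ⟨b, p₂⟩ := p₂
    · simp at hlen
    simp only [List.cons_append, List.cons.injEq] at heq ⊢
    obtain ⟨rfl, heq⟩ := heq
    rcases ih (by simpa using hlen) heq with h | ⟨m, h₁, h₂⟩
    · exact .inl ⟨rfl, h⟩
    · exact .inr ⟨a :: m, h₁.append_left [a], h₂.append_left [a]⟩

theorem ReduceStep.join {m₁ m₂ : List V} (h₁ : ReduceStep l m₁) (h₂ : ReduceStep l m₂) :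
    m₁ = m₂ ∨ ∃ m, ReduceStep m₁ m ∧ ReduceStep m₂ m := by
  obtain ⟨p₁, s₁, u₁, v₁, rfl, rfl⟩ := h₁
  obtain ⟨p₂, s₂, u₂, v₂, heq, rfl⟩ := h₂
  rcases le_total p₁.length p₂.length with hle | hle
  · exact join_of_length_le hle heq
  · rcases join_of_length_le hle heq.symm with h | ⟨m, h₁, h₂⟩
    · exact .inl h.symm
    · exact .inr ⟨m, h₂, h₁⟩

theorem Reduces.church_rosser {m₁ m₂ : List V} (h₁ : Reduces l m₁) (h₂ : Reduces l m₂) :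
    ∃ m, Reduces m₁ m ∧ Reduces m₂ m := by
  refine Relation.church_rosser (fun _ _ _ h₁ h₂ => ?_) h₁ h₂
  rcases h₁.join h₂ with rfl | ⟨m, h₁, h₂⟩
  · exact ⟨_, .refl, .refl⟩
  · exact ⟨m, .single h₁, .single h₂⟩

theorem reduces_reduce (l : List V) : Reduces l (reduce l) := by
  rw [reduce, dif_pos (exists_reduces_isReduced l)]
  exact (exists_reduces_isReduced l).choose_spec.1

theorem isReduced_reduce (l : List V) : IsReduced (reduce l) := by
  rw [reduce, dif_pos (exists_reduces_isReduced l)]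
  exact (exists_reduces_isReduced l).choose_spec.2

theorem reduce_eq_of_reduces (h : Reduces l r) (hr : IsReduced r) : reduce l = r := by
  obtain ⟨m, h₁, h₂⟩ := (reduces_reduce l).church_rosser h
  rw [(isReduced_reduce l).eq_of_reduces h₁, hr.eq_of_reduces h₂]

theorem IsReduced.reduce_eq (hl : IsReduced l) : reduce l = l :=
  reduce_eq_of_reduces .refl hl

theorem Reduces.reduce_eq (h : Reduces l r) : reduce l = reduce r :=
  reduce_eq_of_reduces (h.trans (reduces_reduce r)) (isReduced_reduce r)

theorem reduce_reverse (l : List V) : reduce l.reverse = (reduce l).reverse :=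
  reduce_eq_of_reduces (reduces_reduce l).reverse (isReduced_reduce l).reverse

theorem reduces_append_cons_reverse (m : List V) (a : V) :
    Reduces (m ++ a :: m.reverse) [m.headD a] := by
  induction m with
  | nil => exact .refl
  | cons b m ih =>
    have h := (ih.append_right [b]).append_left [b]
    simp only [List.cons_append, List.append_assoc] at h
    simpa using h.tail ⟨[], [], b, m.headD a, rfl, rfl⟩

theorem exists_forall_ge_eq_of_reduces_succ {u : ℕ → List V} {M B : ℕ}
    (hstep : ∀ m, Reduces (u (m + 1)) (u m)) (hbdd : ∀ m, M ≤ m → (u m).length ≤ B) :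
    ∃ N, ∀ m, N ≤ m → u m = u N := by
  have hmono : ∀ {m m'}, m ≤ m' → Reduces (u m') (u m) := fun hle =>
    ReflTransGen.lift' u (fun _ _ h => h) _ _
      (reflTransGen_of_succ_of_ge (fun i j => Reduces (u i) (u j)) (fun i _ => hstep i) hle)
  have hbdd' : ∀ m, (u m).length ≤ B := fun m =>
    (hmono (le_max_left m M)).length_le.trans (hbdd _ (le_max_right m M))
  obtain ⟨N, hN⟩ := WellFoundedLT.antitone_chain_condition (f := fun m => B - (u m).length)
    fun m m' hle => Nat.sub_le_sub_left (hmono hle).length_le B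
  refine ⟨N, fun m hm => (hmono hm).eq_of_length_le ?_⟩
  have := hN m hm
  have := hbdd' m
  have := hbdd' N
  omega

end Reduction

section Compress

variable {V : Type*}

@[simp] theorem compress_nil : compress ([] : List V) = [] := rfl

@[simp] theorem compress_singleton (a : V) : compress [a] = [a] := rfl

theorem compress_cons (c : V) (l : List V) :
    compress (c :: l) = if l.head? = some c then compress l else c :: compress l := by
  cases l with
  | nil => rfl
  | cons b l => simp only [compress, List.head?_cons, Option.some.injEq, eq_comm (a := b)]

theorem head?_compress : ∀ l : List V, (compress l).head? = l.head?
  | [] => rfl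
  | c :: l => by
    rw [compress_cons]
    split_ifs with h
    · rw [head?_compress l, h]; rfl
    · rfl

theorem compress_append : ∀ l₁ l₂ : List V, compress (l₁ ++ l₂) =
    compress l₁ ++ if l₁.getLast? = l₂.head? then (compress l₂).tail else compress l₂
  | [], l₂ => by cases l₂ <;> simp
  | [c], l₂ => by
    simp only [List.singleton_append, compress_cons c l₂, List.getLast?_singleton,
      eq_comm (a := some c)]
    split_ifs with h
    · rw [compress_singleton, List.singleton_append,
        List.cons_head?_tail (by rwa [head?_compress])]
    · rfl
  | c :: d :: l₁, l₂ => by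
    rw [List.cons_append, compress_cons, compress_cons c, compress_append (d :: l₁) l₂,
      List.getLast?_cons_cons]
    simp only [List.cons_append, List.head?_cons, Option.some.injEq]
    by_cases h : d = c <;> simp [h]

theorem compress_append_cons_cons (l₁ l₂ : List V) (a : V) :
    compress (l₁ ++ a :: a :: l₂) = compress (l₁ ++ a :: l₂) := by
  rw [compress_append, compress_append l₁ (a :: l₂), compress_cons a (a :: l₂)]
  simp only [List.head?_cons, if_true]
  congr

theorem compress_reverse : ∀ l : List V, compress l.reverse = (compress l).reverse
  | [] => rfl
  | c :: l => by
    rw [List.reverse_cons, compress_append, compress_reverse l, compress_cons c l,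
      List.getLast?_reverse]
    split_ifs <;> simp_all

theorem getLast?_compress (l : List V) : (compress l).getLast? = l.getLast? := by
  rw [← List.head?_reverse, ← compress_reverse, head?_compress, List.head?_reverse]

theorem isChain_compress {R : V → V → Prop} :
    ∀ {l : List V}, l.IsChain (fun a b => a = b ∨ R a b) → (compress l).IsChain R
  | [], _ => .nil
  | c :: l, h => by
    rw [List.isChain_cons] at h
    rw [compress_cons]
    split_ifs with hc
    · exact isChain_compress h.2
    · refine List.isChain_cons.2 ⟨fun b hb => ?_, isChain_compress h.2⟩
      rw [head?_compress] at hb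
      exact (h.1 b hb).resolve_left fun hcb => hc (hcb ▸ hb)

theorem reduces_compress_append_cons {l₁ l₂ : List V} {b c c' : V}
    (h₁ : l₁.getLast? = some c) (h₂ : l₂.head? = some c')
    (h : c = b ∨ c' = b ∨ c = c') :
    Reduces (compress (l₁ ++ b :: l₂)) (compress (l₁ ++ l₂)) := by
  obtain ⟨l₁, rfl⟩ : ∃ l, l₁ = l ++ [c] :=
    ⟨_, (List.dropLast_append_getLast? c h₁).symm⟩
  obtain ⟨l₂, rfl⟩ : ∃ l, l₂ = c' :: l := ⟨_, (List.cons_head?_tail h₂).symm⟩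
  by_cases hcb : c = b
  · subst hcb
    simp only [List.append_assoc, List.singleton_append, compress_append_cons_cons,
      ReflTransGen.refl]
  by_cases hc'b : c' = b
  · subst hc'b
    rw [compress_append_cons_cons]
  obtain rfl : c = c' := (h.resolve_left hcb).resolve_left hc'b
  obtain ⟨x, hx⟩ : ∃ x, compress (l₁ ++ [c]) = x ++ [c] :=
    ⟨_, (List.dropLast_append_getLast? c (by simp [getLast?_compress])).symm⟩
  obtain ⟨y, hy⟩ : ∃ y, compress (c :: l₂) = c :: y :=
    ⟨_, (List.cons_head?_tail (by simp [head?_compress])).symm⟩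
  rw [compress_append (l₁ ++ [c]), compress_append (l₁ ++ [c]), compress_cons b, hx, hy]
  simp only [List.getLast?_append, List.getLast?_singleton, Option.some_or, List.head?_cons,
    Option.some.injEq, hcb, if_false, if_true, List.tail_cons]
  exact .single ⟨x, y, c, b, by simp, by simp⟩

end Compress

section LoopWord

variable {V : Type*} {G : SimpleGraph V} {x : V} {a b l r : List V}

theorem lconcat_eq_append_tail (ha : a.getLast? = some x) (hb : b.head? = some x) :
    lconcat a b = a ++ b.tail := by
  rw [lconcat, ← List.cons_head?_tail hb]
  conv_rhs => rw [← List.dropLast_append_getLast? x ha]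
  simp

theorem lconcat_assoc (a : List V) (hb : b ≠ []) (c : List V) :
    lconcat (lconcat a b) c = lconcat a (lconcat b c) := by
  simp [lconcat, List.dropLast_append_of_ne_nil hb]

theorem isLoopWord_singleton : IsLoopWord G x [x] := ⟨List.isChain_singleton x, rfl, rfl⟩

theorem IsLoopWord.ne_nil (hl : IsLoopWord G x l) : l ≠ [] := by
  rintro rfl
  simp [IsLoopWord] at hl

theorem IsLoopWord.reverse (hl : IsLoopWord G x l) : IsLoopWord G x l.reverse :=
  ⟨List.isChain_reverse.2 (hl.1.imp fun _ _ h => h.symm), by simpa using hl.2.2,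
    by simpa using hl.2.1⟩

theorem IsLoopWord.lconcat (ha : IsLoopWord G x a) (hb : IsLoopWord G x b) :
    IsLoopWord G x (lconcat a b) := by
  have hab := lconcat_eq_append_tail ha.2.2 hb.2.1
  refine ⟨?_, ?_, ?_⟩
  · rw [hab, ← List.dropLast_append_getLast? x ha.2.2]
    refine List.IsChain.append_overlap ?_ ?_ (List.cons_ne_nil x [])
    · rw [List.dropLast_append_getLast? x ha.2.2]
      exact ha.1
    · rw [List.singleton_append, List.cons_head?_tail hb.2.1]
      exact hb.1
  · rw [hab, List.head?_append_of_ne_nil _ ha.ne_nil, ha.2.1]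
  · rw [GCG.lconcat, List.getLast?_append_of_ne_nil _ hb.ne_nil, hb.2.2]

theorem ReduceStep.isLoopWord (h : ReduceStep l r) (hl : IsLoopWord G x l) :
    IsLoopWord G x r := by
  obtain ⟨p, s, u, v, rfl, rfl⟩ := h
  refine ⟨?_, ?_, ?_⟩
  · refine List.IsChain.append_overlap (hl.1.prefix ⟨[v, u] ++ s, by simp⟩)
      (hl.1.suffix ⟨p ++ [u, v], by simp⟩) (List.cons_ne_nil u [])
  · cases p <;> simpa using hl.2.1
  · cases s using List.reverseRecOn <;> simpa using hl.2.2

theorem Reduces.isLoopWord (h : Reduces l r) (hl : IsLoopWord G x l) : IsLoopWord G x r := by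
  induction h with
  | refl => exact hl
  | tail _ hstep ih => exact hstep.isLoopWord ih

theorem IsLoopWord.reduce (hl : IsLoopWord G x l) : IsLoopWord G x (reduce l) :=
  (reduces_reduce l).isLoopWord hl

theorem Reduces.lconcat {a' b' : List V} (h₁ : Reduces a a') (h₂ : Reduces b b')
    (ha : IsLoopWord G x a) (hb : IsLoopWord G x b) : Reduces (lconcat a b) (lconcat a' b') := by
  have h₁' := h₁.append_right b.tail
  rw [← lconcat_eq_append_tail ha.2.2 hb.2.1,
    ← lconcat_eq_append_tail (h₁.isLoopWord ha).2.2 hb.2.1] at h₁'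
  exact h₁'.trans (h₂.append_left _)

theorem reduce_lconcat_reduce (ha : IsLoopWord G x a) (hb : IsLoopWord G x b) :
    reduce (lconcat (reduce a) (reduce b)) = reduce (lconcat a b) :=
  ((reduces_reduce a).lconcat (reduces_reduce b) ha hb).reduce_eq.symm

theorem reduce_lconcat_reverse (hl : IsLoopWord G x l) : reduce (lconcat l l.reverse) = [x] := by
  obtain ⟨m, rfl⟩ : ∃ m, l = m ++ [x] :=
    ⟨_, (List.dropLast_append_getLast? x hl.2.2).symm⟩
  have hm : m.head?.getD x = x := by
    cases m with
    | nil => rfl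
    | cons c m => simpa using hl.2.1
  refine reduce_eq_of_reduces ?_ (isReduced_singleton x)
  simpa [GCG.lconcat, hm] using reduces_append_cons_reverse m x

end LoopWord

section LoopWordMap

variable {U V W : Type*} {G : SimpleGraph U} {x : U} {H : SimpleGraph V} {y : V}
  {K : SimpleGraph W} {z : W}

structure IsLoopWordMap (G : SimpleGraph U) (x : U) (H : SimpleGraph V) (y : V)
    (Φ : List U → List V) : Prop where
  isLoopWord {w : List U} : IsLoopWord G x w → IsLoopWord H y (Φ w)
  reduces {w w' : List U} : IsLoopWord G x w → Reduces w w' → Reduces (Φ w) (Φ w')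
  lconcat {a b : List U} : IsLoopWord G x a → IsLoopWord G x b →
    Φ (lconcat a b) = lconcat (Φ a) (Φ b)
  reverse (w : List U) : Φ w.reverse = (Φ w).reverse
  singleton : Φ [x] = [y]

theorem IsLoopWordMap.id : IsLoopWordMap G x G x id :=
  ⟨fun hw => hw, fun _ h => h, fun _ _ => rfl, fun _ => rfl, rfl⟩

theorem IsLoopWordMap.comp {Ψ : List V → List W} {Φ : List U → List V}
    (hΨ : IsLoopWordMap H y K z Ψ) (hΦ : IsLoopWordMap G x H y Φ) :
    IsLoopWordMap G x K z (Ψ ∘ Φ) where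
  isLoopWord hw := hΨ.isLoopWord (hΦ.isLoopWord hw)
  reduces hw h := hΨ.reduces (hΦ.isLoopWord hw) (hΦ.reduces hw h)
  lconcat ha hb := by
    simp only [Function.comp, hΦ.lconcat ha hb,
      hΨ.lconcat (hΦ.isLoopWord ha) (hΦ.isLoopWord hb)]
  reverse w := by simp only [Function.comp, hΦ.reverse, hΨ.reverse]
  singleton := by simp only [Function.comp, hΦ.singleton, hΨ.singleton]

theorem IsLoopWordMap.reduce_map_reduce {Φ : List U → List V} (hΦ : IsLoopWordMap G x H y Φ)
    {w : List U} (hw : IsLoopWord G x w) : reduce (Φ (reduce w)) = reduce (Φ w) :=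
  (hΦ.reduces hw (reduces_reduce w)).reduce_eq.symm

end LoopWordMap

section Subdivision

variable {V S : Type*} {G : SimpleGraph V} {Gs : SimpleGraph (V ⊕ S)} {ε : S → Sym2 V}

/-- What DRC needs to know about a subdivision `Gs` of `G`: `ε σ` is the edge of `G` that the
subdivision vertex `σ` lies on. -/
structure IsEdgeLabelling (G : SimpleGraph V) (Gs : SimpleGraph (V ⊕ S)) (ε : S → Sym2 V) :
    Prop where
  mem_edgeSet (σ : S) : ε σ ∈ G.edgeSet
  eq_of_adj_inr {σ τ : S} : Gs.Adj (.inr σ) (.inr τ) → ε σ = ε τ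
  mem_of_adj_inl {σ : S} {c : V} : Gs.Adj (.inr σ) (.inl c) → c ∈ ε σ
  not_adj_inl (a b : V) : ¬Gs.Adj (.inl a) (.inl b)

theorem IsEvenSubdivision.exists_isEdgeLabelling {d : ℕ} (h : IsEvenSubdivision G d Gs)
    (hd : 2 ≤ d) : ∃ ε, IsEdgeLabelling G Gs ε := by
  obtain ⟨P, h0, hlast, hint, -, -, hsurj, huniq, hadj⟩ := h
  have hends : ∀ i : Fin (d + 1), i = 0 ∨ i = Fin.last d ∨ (0 < i.val ∧ i.val < d) := fun i => by
    rw [Fin.ext_iff, Fin.ext_iff, Fin.val_zero, Fin.val_last]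
    have := i.isLt
    omega
  have hinl : ∀ {e i c}, P e i = .inl c →
      (i = 0 ∧ c = e.toProd.1) ∨ (i = Fin.last d ∧ c = e.toProd.2) := by
    intro e i c he
    rcases hends i with rfl | rfl | hi
    · exact .inl ⟨rfl, by simpa [h0] using he.symm⟩
    · exact .inr ⟨rfl, by simpa [hlast] using he.symm⟩
    · obtain ⟨σ, hσ⟩ := hint e i hi.1 hi.2
      simp [hσ] at he
  have hinr : ∀ {e i σ}, P e i = .inr σ → 0 < i.val ∧ i.val < d := by
    intro e i σ he
    rcases hends i with rfl | rfl | hi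
    · simp [h0] at he
    · simp [hlast] at he
    · exact hi
  choose e₀ i₀ hP₀ using hsurj
  have hedge : ∀ {e i σ}, P e i = .inr σ → e.edge = (e₀ σ).edge := by
    intro e i σ he
    have hi₀ := hinr (hP₀ σ)
    rcases huniq (e₀ σ) e (i₀ σ) i hi₀.1 hi₀.2 ((hP₀ σ).trans he.symm) with
      ⟨rfl, -⟩ | ⟨rfl, -⟩
    · rfl
    · exact SimpleGraph.Dart.edge_symm _
  refine ⟨fun σ => (e₀ σ).edge, fun σ => (e₀ σ).edge_mem, fun hστ => ?_, fun hσc => ?_,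
    fun a b hab => ?_⟩
  · obtain ⟨e, i, h₁, h₂⟩ := (hadj _ _).1 hστ
    exact (hedge h₁).symm.trans (hedge h₂)
  · obtain ⟨e, i, h₁, h₂⟩ := (hadj _ _).1 hσc
    rw [← hedge h₁]
    rcases hinl h₂ with ⟨-, rfl⟩ | ⟨-, rfl⟩
    · exact Sym2.mem_mk_left _ _
    · exact Sym2.mem_mk_right _ _
  · obtain ⟨e, i, h₁, h₂⟩ := (hadj _ _).1 hab
    rcases hinl h₁ with ⟨h, -⟩ | ⟨h, -⟩ <;> rcases hinl h₂ with ⟨h', -⟩ | ⟨h', -⟩ <;>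
      simp only [Fin.ext_iff, Fin.val_castSucc, Fin.val_succ, Fin.val_zero, Fin.val_last]
        at h h' <;>
      omega

end Subdivision

section DRC

variable {V' V S : Type*} {G' : SimpleGraph V'} {G : SimpleGraph V}
  {Gs : SimpleGraph (V ⊕ S)} {ε : S → Sym2 V} {f : V' → V ⊕ S} {x' : V'} {x : V}

theorem head?_filterMap_getLeft {W : List (V ⊕ S)} {a : V} (h : W.head? = some (.inl a)) :
    (W.filterMap Sum.getLeft?).head? = some a := by
  obtain _ | ⟨_, W⟩ := W
  · simp at h
  · obtain rfl := Option.some.inj h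
    simp

theorem getLast?_filterMap_getLeft {W : List (V ⊕ S)} {a : V} (h : W.getLast? = some (.inl a)) :
    (W.filterMap Sum.getLeft?).getLast? = some a := by
  rw [← List.head?_reverse, ← List.filterMap_reverse]
  exact head?_filterMap_getLeft (by rwa [List.head?_reverse])

theorem ReduceStep.map {l r : List V'} (f : V' → V) (h : ReduceStep l r) :
    ReduceStep (l.map f) (r.map f) := by
  obtain ⟨p, s, u, v, rfl, rfl⟩ := h
  exact ⟨p.map f, s.map f, f u, f v, by simp, by simp⟩

namespace IsEdgeLabelling

variable (hε : IsEdgeLabelling G Gs ε)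
include hε

theorem eq_or_adj_of_mem {σ : S} {a b : V} (ha : a ∈ ε σ) (hb : b ∈ ε σ) :
    a = b ∨ G.Adj a b := by
  refine or_iff_not_imp_left.2 fun hab => ?_
  rw [← SimpleGraph.mem_edgeSet, ← (Sym2.mem_and_mem_iff hab).1 ⟨ha, hb⟩]
  exact hε.mem_edgeSet σ

theorem mem_of_mem_head?_filterMap {σ : S} {L : List (V ⊕ S)}
    (h : (Sum.inr σ :: L).IsChain Gs.Adj) {c : V} (hc : c ∈ (L.filterMap Sum.getLeft?).head?) :
    c ∈ ε σ := by
  induction L generalizing σ with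
  | nil => simp at hc
  | cons z L ih =>
    rw [List.isChain_cons_cons] at h
    rcases z with b | τ
    · simp only [List.filterMap_cons, Sum.getLeft?_inl, List.head?_cons, Option.mem_def,
        Option.some.injEq] at hc
      subst hc
      exact hε.mem_of_adj_inl h.1
    · simp only [List.filterMap_cons, Sum.getLeft?_inr] at hc
      rw [hε.eq_of_adj_inr h.1]
      exact ih h.2 hc

theorem mem_of_mem_getLast?_filterMap {σ : S} {L : List (V ⊕ S)}
    (h : (L ++ [Sum.inr σ]).IsChain Gs.Adj) {c : V}
    (hc : c ∈ (L.filterMap Sum.getLeft?).getLast?) :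
    c ∈ ε σ := by
  refine hε.mem_of_mem_head?_filterMap (L := L.reverse) ?_ ?_
  · simpa using List.isChain_reverse.2 (h.imp fun _ _ h => h.symm)
  · rwa [List.filterMap_reverse, List.head?_reverse]

theorem isChain_filterMap_getLeft {W : List (V ⊕ S)} (h : W.IsChain Gs.Adj) :
    (W.filterMap Sum.getLeft?).IsChain (fun a b => a = b ∨ G.Adj a b) := by
  induction W with
  | nil => exact .nil
  | cons z W ih =>
    rcases z with a | σ
    · refine List.isChain_cons.2 ⟨fun b hb => ?_, ih h.tail⟩
      rcases W with _ | ⟨_ | τ, W⟩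
      · simp at hb
      · exact absurd (List.isChain_cons_cons.1 h).1 (hε.not_adj_inl _ _)
      · have h' := List.isChain_cons_cons.1 h
        exact hε.eq_or_adj_of_mem (hε.mem_of_adj_inl h'.1.symm)
          (hε.mem_of_mem_head?_filterMap h'.2 (by simpa [List.filterMap_cons] using hb))
    · exact ih h.tail

/-- Deleting `b` from `… σ b σ …`: the letters `c`, `c'` surviving next to `b` are, like `b`, ends
of the edge `ε σ`, so `c = b`, `c' = b` or `c = c'`. -/
theorem reduces_compress_filterMap_getLeft_of_inr_inl {p s : List (V ⊕ S)} {σ : S} {b c c' : V}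
    (hW : (p ++ [Sum.inr σ, Sum.inl b, Sum.inr σ] ++ s).IsChain Gs.Adj)
    (hc : (p.filterMap Sum.getLeft?).getLast? = some c)
    (hc' : (s.filterMap Sum.getLeft?).head? = some c') :
    Reduces (compress ((p ++ [Sum.inr σ, Sum.inl b, Sum.inr σ] ++ s).filterMap Sum.getLeft?))
      (compress ((p ++ [Sum.inr σ] ++ s).filterMap Sum.getLeft?)) := by
  have hcσ : c ∈ ε σ :=
    hε.mem_of_mem_getLast?_filterMap (hW.prefix ⟨[.inl b, .inr σ] ++ s, by simp⟩) hc
  have hc'σ : c' ∈ ε σ :=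
    hε.mem_of_mem_head?_filterMap (hW.suffix ⟨p ++ [.inr σ, .inl b], by simp⟩) hc'
  have hbσ : b ∈ ε σ :=
    hε.mem_of_adj_inl (List.isChain_pair.1 (hW.infix ⟨p, [.inr σ] ++ s, by simp⟩))
  have hcases : c = b ∨ c' = b ∨ c = c' := by
    by_contra! hne
    rw [(Sym2.mem_and_mem_iff hne.1).1 ⟨hcσ, hbσ⟩, Sym2.mem_iff] at hc'σ
    exact hc'σ.elim (fun h => hne.2.2 h.symm) hne.2.1
  simpa [List.filterMap_append, List.filterMap_cons] using
    reduces_compress_append_cons hc hc' hcases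

theorem reduces_compress_filterMap_getLeft {W W' : List (V ⊕ S)} {a a' : V}
    (hW : W.IsChain Gs.Adj) (hhead : W.head? = some (.inl a))
    (hlast : W.getLast? = some (.inl a')) (h : ReduceStep W W') :
    Reduces (compress (W.filterMap Sum.getLeft?)) (compress (W'.filterMap Sum.getLeft?)) := by
  obtain ⟨p, s, u, v, rfl, rfl⟩ := h
  have huv : Gs.Adj u v := List.isChain_pair.1 (hW.infix ⟨p, [u] ++ s, by simp⟩)
  rcases u with a₁ | σ <;> rcases v with b | τ
  · exact absurd huv (hε.not_adj_inl _ _)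
  · simpa [List.filterMap_append, List.filterMap_cons, compress_append_cons_cons] using .refl
  · have hp : (p.filterMap Sum.getLeft?).head? = some a := by
      obtain _ | ⟨z, p⟩ := p
      · simp at hhead
      · exact head?_filterMap_getLeft (by simpa using hhead)
    have hs : (s.filterMap Sum.getLeft?).getLast? = some a' := by
      obtain rfl | ⟨s, z, rfl⟩ := s.eq_nil_or_concat'
      · simp at hlast
      · exact getLast?_filterMap_getLeft
          (by rwa [List.getLast?_append_of_ne_nil _ (by simp)] at hlast)
    obtain ⟨c, hc⟩ : ∃ c, (p.filterMap Sum.getLeft?).getLast? = some c :=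
      Option.isSome_iff_exists.1 (List.getLast?_isSome.2 fun h => by simp [h] at hp)
    obtain ⟨c', hc'⟩ : ∃ c', (s.filterMap Sum.getLeft?).head? = some c' :=
      Option.isSome_iff_exists.1 (List.isSome_head?.2 fun h => by simp [h] at hs)
    exact hε.reduces_compress_filterMap_getLeft_of_inr_inl hW hc hc'
  · simpa [List.filterMap_append, List.filterMap_cons] using .refl

end IsEdgeLabelling

theorem DRC_eq_compress_filterMap_map (f : V' → V ⊕ S) (w : List V') :
    DRC f w = compress ((w.map f).filterMap Sum.getLeft?) := by
  rw [DRC, List.filterMap_map]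
  rfl

theorem DRC_reverse (f : V' → V ⊕ S) (w : List V') : DRC f w.reverse = (DRC f w).reverse := by
  rw [DRC, List.filterMap_reverse, compress_reverse, DRC]

theorem isLoopWordMap_DRC (hε : IsEdgeLabelling G Gs ε)
    (hf : ∀ ⦃u v⦄, G'.Adj u v → Gs.Adj (f u) (f v)) (hx : f x' = .inl x) :
    IsLoopWordMap G' x' G x (DRC f) := by
  have hhead : ∀ {w : List V'}, w.head? = some x' → (w.map f).head? = some (.inl x) :=
    fun hw => by simp [hw, hx]
  have hlast : ∀ {w : List V'}, w.getLast? = some x' → (w.map f).getLast? = some (.inl x) :=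
    fun hw => by simp [List.getLast?_map, hw, hx]
  have hchain : ∀ {w : List V'}, w.IsChain G'.Adj → (w.map f).IsChain Gs.Adj :=
    List.isChain_map_of_isChain f fun _ _ h => hf h
  have hloop : ∀ {w}, IsLoopWord G' x' w → IsLoopWord G x (DRC f w) := fun hw => by
    rw [DRC_eq_compress_filterMap_map]
    exact ⟨isChain_compress (hε.isChain_filterMap_getLeft (hchain hw.1)),
      by rw [head?_compress, head?_filterMap_getLeft (hhead hw.2.1)],
      by rw [getLast?_compress, getLast?_filterMap_getLeft (hlast hw.2.2)]⟩
  refine ⟨hloop, fun {w w'} hw h => ?_, fun {a b} ha hb => ?_, DRC_reverse f, ?_⟩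
  · induction h with
    | refl => exact .refl
    | @tail w₁ w₂ hww₁ hstep ih =>
      have hw₁ : IsLoopWord G' x' w₁ := Reduces.isLoopWord hww₁ hw
      refine ih.trans ?_
      simp only [DRC_eq_compress_filterMap_map]
      exact hε.reduces_compress_filterMap_getLeft (hchain hw₁.1) (hhead hw₁.2.1)
        (hlast hw₁.2.2) (hstep.map f)
  · rw [lconcat_eq_append_tail ha.2.2 hb.2.1,
      lconcat_eq_append_tail (hloop ha).2.2 (hloop hb).2.1]
    conv_rhs => rw [← List.cons_head?_tail hb.2.1]
    simp only [DRC_eq_compress_filterMap_map, List.map_append, List.filterMap_append,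
      List.map_cons, hx, List.filterMap_cons, Sum.getLeft?_inl, compress_append, compress_cons,
      getLast?_filterMap_getLeft (hlast ha.2.2)]
    split_ifs <;> simp_all
  · simp [DRC, hx]

end DRC

namespace GraphTower

variable (T : GraphTower)

theorem isLoopWordMap_phi (n : ℕ) :
    IsLoopWordMap (T.G (n + 1)) (T.x (n + 1)) (T.G n) (T.x n) (T.phi n) := by
  obtain ⟨ε, hε⟩ := (T.subdiv n).exists_isEdgeLabelling (T.two_le_d n)
  exact isLoopWordMap_DRC hε (T.f_simplicial n) (T.f_base n)

theorem isLoopWordMap_proj (n : ℕ) :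
    ∀ m, IsLoopWordMap (T.G (n + m)) (T.x (n + m)) (T.G n) (T.x n) (T.proj n m)
  | 0 => .id
  | m + 1 => (isLoopWordMap_proj n m).comp (T.isLoopWordMap_phi (n + m))

variable {T} {g h k : ∀ n, List (T.V n)}

theorem MemG.isLoopWord (hg : T.MemG g) (n : ℕ) : IsLoopWord (T.G n) (T.x n) (g n) :=
  (hg.1 n).1

theorem memG_seqOne : T.MemG T.seqOne :=
  ⟨fun _ => ⟨isLoopWord_singleton, isReduced_singleton _⟩, fun n => by
    simp only [seqOne, (T.isLoopWordMap_phi n).singleton, (isReduced_singleton _).reduce_eq]⟩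

theorem MemG.seqMul (hg : T.MemG g) (hh : T.MemG h) : T.MemG (T.seqMul g h) := by
  refine ⟨fun n => ⟨((hg.isLoopWord n).lconcat (hh.isLoopWord n)).reduce, isReduced_reduce _⟩,
    fun n => ?_⟩
  have hφ := T.isLoopWordMap_phi n
  rw [GraphTower.seqMul, GraphTower.seqMul,
    hφ.reduce_map_reduce ((hg.isLoopWord _).lconcat (hh.isLoopWord _)),
    hφ.lconcat (hg.isLoopWord _) (hh.isLoopWord _), ← hg.2 n, ← hh.2 n,
    reduce_lconcat_reduce (hφ.isLoopWord (hg.isLoopWord _)) (hφ.isLoopWord (hh.isLoopWord _))]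

theorem MemG.seqInv (hg : T.MemG g) : T.MemG (T.seqInv g) :=
  ⟨fun n => ⟨(hg.isLoopWord n).reverse, (hg.1 n).2.reverse⟩, fun n => by
    simp only [GraphTower.seqInv, (T.isLoopWordMap_phi n).reverse, reduce_reverse, hg.2 n]⟩

theorem seqMul_assoc (hg : T.MemG g) (hh : T.MemG h) (hk : T.MemG k) :
    T.seqMul (T.seqMul g h) k = T.seqMul g (T.seqMul h k) := by
  funext n
  have hgh := (hg.isLoopWord n).lconcat (hh.isLoopWord n)
  have hhk := (hh.isLoopWord n).lconcat (hk.isLoopWord n)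
  rw [seqMul, seqMul, seqMul, seqMul,
    ← ((reduces_reduce _).lconcat .refl hgh (hk.isLoopWord n)).reduce_eq,
    ← (Reduces.lconcat .refl (reduces_reduce _) (hg.isLoopWord n) hhk).reduce_eq,
    lconcat_assoc _ (hh.isLoopWord n).ne_nil]

theorem seqOne_seqMul (hg : T.MemG g) : T.seqMul T.seqOne g = g :=
  funext fun n => by simp [seqMul, seqOne, lconcat, (hg.1 n).2.reduce_eq]

theorem seqMul_seqOne (hg : T.MemG g) : T.seqMul g T.seqOne = g :=
  funext fun n => by
    rw [seqMul, seqOne, lconcat, List.dropLast_append_getLast? _ (hg.isLoopWord n).2.2,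
      (hg.1 n).2.reduce_eq]

theorem seqMul_seqInv (hg : T.MemG g) : T.seqMul g (T.seqInv g) = T.seqOne :=
  funext fun n => reduce_lconcat_reverse (hg.isLoopWord n)

theorem seqInv_seqMul (hg : T.MemG g) : T.seqMul (T.seqInv g) g = T.seqOne :=
  funext fun n => by
    have := reduce_lconcat_reverse (hg.isLoopWord n).reverse
    rwa [List.reverse_reverse] at this

theorem lec_seqOne : T.LEC T.seqOne := fun n =>
  ⟨0, fun m _ => by
    simp only [seqOne, (T.isLoopWordMap_proj n m).singleton,
      (T.isLoopWordMap_proj n 0).singleton]⟩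

theorem LEC.seqInv (hg : T.LEC g) : T.LEC (T.seqInv g) := fun n => by
  obtain ⟨M, hM⟩ := hg n
  exact ⟨M, fun m hm => by
    simp only [GraphTower.seqInv, (T.isLoopWordMap_proj n _).reverse, hM m hm]⟩

/-- By coherence, the level-`n` projections of `(g h)'` can only grow with the level they come
from; from `max Mg Mh` on they are reductions of one fixed word, so they stabilize. -/
theorem LEC.seqMul (hg : T.MemG g) (hh : T.MemG h) (hlg : T.LEC g) (hlh : T.LEC h) :
    T.LEC (T.seqMul g h) := by
  intro n
  obtain ⟨Mg, hMg⟩ := hlg n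
  obtain ⟨Mh, hMh⟩ := hlh n
  have hgh := hg.seqMul hh
  set W := lconcat (T.proj n Mg (g (n + Mg))) (T.proj n Mh (h (n + Mh)))
  refine exists_forall_ge_eq_of_reduces_succ (u := fun m => T.proj n m (T.seqMul g h (n + m)))
    (M := max Mg Mh) (B := W.length) (fun m => ?_) (fun m hm => ?_)
  · have := (T.isLoopWordMap_proj n m).reduces
      ((T.isLoopWordMap_phi (n + m)).isLoopWord (hgh.isLoopWord _)) (reduces_reduce _)
    rwa [hgh.2 (n + m)] at this
  · have hπ := T.isLoopWordMap_proj n m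
    have := hπ.reduces ((hg.isLoopWord _).lconcat (hh.isLoopWord _)) (reduces_reduce _)
    rw [hπ.lconcat (hg.isLoopWord _) (hh.isLoopWord _), hMg m (le_of_max_le_left hm),
      hMh m (le_of_max_le_right hm)] at this
    exact this.length_le

end GraphTower

/-- `G = lim←(Ω'_n, φ'_n)` is a group under the componentwise
operation `(g_n)·(h_n) = ((g_n h_n)')_n`, with identity `(x_n)_n` and inversion
by termwise reversal, and the set `𝒢` of locally eventually constant sequences
is a subgroup of `G`. -/
theorem statement_8 (T : GraphTower) :
    T.MemG T.seqOne ∧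
    (∀ g h, T.MemG g → T.MemG h → T.MemG (T.seqMul g h)) ∧
    (∀ g h k, T.MemG g → T.MemG h → T.MemG k →
      T.seqMul (T.seqMul g h) k = T.seqMul g (T.seqMul h k)) ∧
    (∀ g, T.MemG g → T.seqMul T.seqOne g = g ∧ T.seqMul g T.seqOne = g) ∧
    (∀ g, T.MemG g → T.MemG (T.seqInv g) ∧
      T.seqMul g (T.seqInv g) = T.seqOne ∧ T.seqMul (T.seqInv g) g = T.seqOne) ∧
    T.LEC T.seqOne ∧
    (∀ g h, T.MemG g → T.MemG h → T.LEC g → T.LEC h → T.LEC (T.seqMul g h)) ∧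
    (∀ g, T.MemG g → T.LEC g → T.LEC (T.seqInv g)) :=
  ⟨GraphTower.memG_seqOne,
    fun _ _ hg hh => hg.seqMul hh,
    fun _ _ _ hg hh hk => GraphTower.seqMul_assoc hg hh hk,
    fun _ hg => ⟨GraphTower.seqOne_seqMul hg, GraphTower.seqMul_seqOne hg⟩,
    fun _ hg => ⟨hg.seqInv, GraphTower.seqMul_seqInv hg, GraphTower.seqInv_seqMul hg⟩,
    GraphTower.lec_seqOne,
    fun _ _ hg hh hlg hlh => hlg.seqMul hg hh hlh,
    fun _ _ hlg => hlg.seqInv⟩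

end GCG
end
end

section
/- In any weight system (L_n)_{n≥1}, for every n, writing L_n = (a_1, …, a_k), there exists an integer j ≥ 1 such that |L_{n+1}| = |L_n| − a_k/2^j. Consequently the sequence of lengths (|L_n|)_n is strictly decreasing and bounded below by 0, so the limit ‖L‖ = lim_{n→∞} |L_n| exists and ‖L‖ ≥ 0. -/
namespace WS

/-- One refinement step of the recursive weighting scheme: the entries of `a`
are split into consecutive blocks of `b` (block `t` occupying the 0-indexed
positions `I t ≤ p < I (t+1)`), with `b[p] = a[t]/2^(p−I t+1)` within block `t`,
except that the first entry of each block after the first receives the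
carryover `a[t−1]/2^(I t − I (t−1)) + a[t]/2`. -/
def SubdivStep (a b : List ℝ) : Prop :=
  ∃ I : ℕ → ℕ,
    I 0 = 0 ∧
    (∀ t, t < a.length → I t < I (t + 1)) ∧
    b.length = I a.length ∧
    (∀ t, t < a.length → ∀ p, I t ≤ p → p < I (t + 1) →
      b.getD p 0 =
        if 0 < t ∧ p = I t then
          a.getD (t - 1) 0 / 2 ^ (I t - I (t - 1)) + a.getD t 0 / 2
        else a.getD t 0 / 2 ^ (p - I t + 1))

/-- A weight system: a sequence of nonempty finite lists of reals, starting with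
`(1/2, 1/2², …, 1/2^s)` for some `s ≥ 1`, each obtained from the previous one by
a refinement step.  (Indexing starts at 0, so `L 0` is the paper's `L₁`.) -/
def IsWeightSystem (L : ℕ → List ℝ) : Prop :=
  (∀ n, L n ≠ []) ∧
  (∃ s : ℕ, 1 ≤ s ∧ L 0 = (List.range s).map fun i => (1 : ℝ) / 2 ^ (i + 1)) ∧
  ∀ n, SubdivStep (L n) (L (n + 1))

end WS

/-!
Write `c_t` for the carryover that block `t` of `L_{n+1}` receives (`c_0 = 0`). Without its
carryover, block `t` is the geometric sequence `a_t/2, …, a_t/2^ℓ`, of sum `a_t - a_t/2^ℓ`, and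
`a_t/2^ℓ = c_{t+1}`; so block `t` sums to `c_t + a_t - c_{t+1}`. Summing over the blocks
telescopes to `|L_{n+1}| = |L_n| - c_k`, where `c_k = a_k/2^j` is what the last block would pass
on. All entries stay positive, so the lengths decrease strictly and converge to their infimum.
-/

open Finset

theorem List.sum_eq_sum_range_getD {M : Type*} [AddCommMonoid M] (l : List M) :
    l.sum = ∑ i ∈ Finset.range l.length, l.getD i 0 := by
  induction l with
  | nil => simp
  | cons x xs ih =>
    rw [List.sum_cons, ih, List.length_cons, Finset.sum_range_succ', add_comm]
    simp

theorem List.getD_pos {α : Type*} [Zero α] [LT α] {l : List α} (hl : ∀ x ∈ l, 0 < x) {i : ℕ}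
    (hi : i < l.length) : 0 < l.getD i 0 := by
  rw [List.getD_eq_getElem _ _ hi]
  exact hl _ (List.getElem_mem hi)

theorem Finset.sum_range_div_two_pow_succ {K : Type*} [Field K] [NeZero (2 : K)] (x : K) (n : ℕ) :
    ∑ i ∈ range n, x / 2 ^ (i + 1) = x - x / 2 ^ n := by
  calc ∑ i ∈ range n, x / 2 ^ (i + 1)
      = ∑ i ∈ range n, (x / 2 ^ i - x / 2 ^ (i + 1)) :=
        sum_congr rfl fun i _ => by field_simp; ring
    _ = x - x / 2 ^ n := by simpa using sum_range_sub' (fun i => x / 2 ^ i) n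

theorem Finset.sum_range_eq_sum_sum_Ico {M : Type*} [AddCommMonoid M] (f : ℕ → M) {I : ℕ → ℕ}
    (h0 : I 0 = 0) {n : ℕ} (hI : ∀ t < n, I t ≤ I (t + 1)) :
    ∑ p ∈ range (I n), f p = ∑ t ∈ range n, ∑ p ∈ Ico (I t) (I (t + 1)), f p := by
  induction n with
  | zero => simp [h0]
  | succ n ih =>
    rw [sum_range_succ, ← ih fun t ht => hI t (by omega),
      sum_range_add_sum_Ico _ (hI n n.lt_succ_self)]

theorem Nat.exists_mem_Ico_of_lt {I : ℕ → ℕ} (h0 : I 0 = 0) {n p : ℕ} (hp : p < I n) :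
    ∃ t < n, I t ≤ p ∧ p < I (t + 1) := by
  induction n with
  | zero => omega
  | succ n ih =>
    by_cases h : p < I n
    · obtain ⟨t, ht, hle, hlt⟩ := ih h
      exact ⟨t, by omega, hle, hlt⟩
    · exact ⟨n, n.lt_succ_self, by omega, hp⟩

namespace WS

noncomputable def carryIn (a : List ℝ) (I : ℕ → ℕ) : ℕ → ℝ
  | 0 => 0
  | t + 1 => a.getD t 0 / 2 ^ (I (t + 1) - I t)

theorem carryIn_nonneg {a : List ℝ} (ha : ∀ x ∈ a, 0 < x) (I : ℕ → ℕ) {t : ℕ}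
    (ht : t ≤ a.length) : 0 ≤ carryIn a I t := by
  cases t with
  | zero => exact le_rfl
  | succ t => exact (div_pos (List.getD_pos ha (by omega)) (by positivity)).le

/-- `SubdivStep a b` with block boundaries `I`, the carryover now written as an extra summand
on the first entry of each block. -/
structure IsSubdivisionBy (a b : List ℝ) (I : ℕ → ℕ) : Prop where
  zero : I 0 = 0
  lt_succ : ∀ t < a.length, I t < I (t + 1)
  length_eq : b.length = I a.length
  getD_eq : ∀ t < a.length, ∀ p, I t ≤ p → p < I (t + 1) →
    b.getD p 0 = a.getD t 0 / 2 ^ (p - I t + 1) + if p = I t then carryIn a I t else 0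

theorem SubdivStep.exists_isSubdivisionBy {a b : List ℝ} (h : SubdivStep a b) :
    ∃ I, IsSubdivisionBy a b I := by
  obtain ⟨I, h0, hlt, hlen, hval⟩ := h
  refine ⟨I, h0, hlt, hlen, fun t ht p hp₁ hp₂ => ?_⟩
  rw [hval t ht p hp₁ hp₂]
  by_cases hp : p = I t
  · subst hp
    cases t with
    | zero => simp [carryIn]
    | succ t => simp [carryIn, add_comm]
  · simp [hp]

namespace IsSubdivisionBy

variable {a b : List ℝ} {I : ℕ → ℕ}

theorem sum_Ico (h : IsSubdivisionBy a b I) {t : ℕ} (ht : t < a.length) :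
    ∑ p ∈ Ico (I t) (I (t + 1)), b.getD p 0 =
      carryIn a I t + a.getD t 0 - carryIn a I (t + 1) := by
  rw [sum_congr rfl fun p hp => h.getD_eq t ht p (mem_Ico.1 hp).1 (mem_Ico.1 hp).2,
    sum_add_distrib, sum_ite_eq', if_pos (left_mem_Ico.2 (h.lt_succ t ht)),
    sum_Ico_eq_sum_range]
  simp only [Nat.add_sub_cancel_left, sum_range_div_two_pow_succ, carryIn]
  ring

theorem sum_eq (h : IsSubdivisionBy a b I) : b.sum = a.sum - carryIn a I a.length := by
  rw [List.sum_eq_sum_range_getD, h.length_eq,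
    sum_range_eq_sum_sum_Ico _ h.zero fun t ht => (h.lt_succ t ht).le,
    sum_congr rfl fun t ht => h.sum_Ico (mem_range.1 ht), List.sum_eq_sum_range_getD a]
  simp only [add_sub_right_comm _ (a.getD _ 0), sum_add_distrib, sum_range_sub']
  rw [carryIn, zero_sub, ← sub_eq_neg_add]

theorem pos (h : IsSubdivisionBy a b I) (ha : ∀ x ∈ a, 0 < x) : ∀ x ∈ b, 0 < x := by
  intro x hx
  obtain ⟨p, hp, rfl⟩ := List.mem_iff_getElem.1 hx
  obtain ⟨t, ht, hp₁, hp₂⟩ := Nat.exists_mem_Ico_of_lt h.zero (h.length_eq ▸ hp)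
  rw [← List.getD_eq_getElem _ 0 hp, h.getD_eq t ht p hp₁ hp₂]
  have := carryIn_nonneg ha I ht.le
  have := List.getD_pos ha ht
  positivity

end IsSubdivisionBy

namespace SubdivStep

variable {a b : List ℝ}

theorem sum_eq (h : SubdivStep a b) (ha : a ≠ []) :
    ∃ j : ℕ, 1 ≤ j ∧ b.sum = a.sum - a.getD (a.length - 1) 0 / 2 ^ j := by
  obtain ⟨I, hI⟩ := h.exists_isSubdivisionBy
  obtain ⟨k, hk⟩ := Nat.exists_eq_add_one.2 (List.length_pos_iff.2 ha)
  have hlt := hI.lt_succ k (by omega)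
  refine ⟨I (k + 1) - I k, by omega, ?_⟩
  rw [hI.sum_eq, hk, carryIn, Nat.add_sub_cancel]

theorem pos (h : SubdivStep a b) (ha : ∀ x ∈ a, 0 < x) : ∀ x ∈ b, 0 < x :=
  let ⟨_, hI⟩ := h.exists_isSubdivisionBy
  hI.pos ha

end SubdivStep

namespace IsWeightSystem

variable {L : ℕ → List ℝ}

theorem pos (hL : IsWeightSystem L) (n : ℕ) : ∀ x ∈ L n, 0 < x := by
  induction n with
  | zero =>
    obtain ⟨s, -, hs⟩ := hL.2.1
    simp only [hs, List.mem_map, List.mem_range, forall_exists_index, and_imp]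
    rintro _ i - rfl
    positivity
  | succ n ih => exact (hL.2.2 n).pos ih

theorem strictAnti_sum (hL : IsWeightSystem L) : StrictAnti fun n => (L n).sum := by
  refine strictAnti_nat_of_succ_lt fun n => ?_
  obtain ⟨j, -, hj⟩ := (hL.2.2 n).sum_eq (hL.1 n)
  have hlast := List.getD_pos (hL.pos n) (Nat.sub_one_lt (List.length_pos_iff.2 (hL.1 n)).ne')
  rw [hj]
  linarith [div_pos hlast (pow_pos two_pos j)]

end IsWeightSystem

/-- In any weight system, for every `n` there is an integer `j ≥ 1`
with `|L_{n+1}| = |L_n| − a_k/2^j` (`a_k` the last entry of `L n`); consequently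
the lengths `|L_n|` are strictly decreasing and bounded below by `0`, so the
limit `‖L‖ = lim_n |L_n|` exists and is `≥ 0`. -/
theorem statement_11 (L : ℕ → List ℝ) (hL : IsWeightSystem L) :
    (∀ n, ∃ j : ℕ, 1 ≤ j ∧
      (L (n + 1)).sum = (L n).sum - (L n).getD ((L n).length - 1) 0 / 2 ^ j) ∧
    StrictAnti (fun n => (L n).sum) ∧
    (∀ n, 0 ≤ (L n).sum) ∧
    ∃ ℓ : ℝ, Filter.Tendsto (fun n => (L n).sum) Filter.atTop (nhds ℓ) ∧ 0 ≤ ℓ := by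
  have hnonneg n : 0 ≤ (L n).sum := List.sum_nonneg fun x hx => (hL.pos n x hx).le
  refine ⟨fun n => (hL.2.2 n).sum_eq (hL.1 n), hL.strictAnti_sum, hnonneg,
    ⨅ n, (L n).sum, ?_, le_ciInf hnonneg⟩
  exact tendsto_atTop_ciInf hL.strictAnti_sum.antitone ⟨0, Set.forall_mem_range.2 hnonneg⟩

end WS
end
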